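/- arXiv:1607.06411 — 6 statements merged into one kernel-verified Lean document; each statement's English description precedes it below -/
import Mathlib

section
/- Let a be a finite-dimensional Lie algebra over a field F of characteristic zero, B a commutative associative unital F-algebra, and s an indeterminate. Then for all P ∈ S(a)⊗B, F ∈ a*⊗B, and X ∈ a⊗B, one has P(F + s(X·F)) ≡ P(F) − s·(X·P)(F) mod s²B[s], where both sides are computed in B[s]. -/
/-!
To first order in `s`, `P(F + s G) = P(F) + s ∑ⱼ G(eⱼ) ∂ⱼP(F)` for any `G`. On the other hand
`(X·P)(F) = ∑ⱼ F(⁅X, eⱼ⁆) ∂ⱼP(F)`, and antisymmetry of the bracket turns `F(⁅X, eⱼ⁆)` into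
`-(X·F)(eⱼ)`; taking `G = X·F` gives the claim.
-/

open MvPolynomial

/-- The extension of the assignment `X j ↦ v j` on variables to a derivation of the
polynomial ring: `p ↦ ∑ j, v j * ∂p/∂X j`.  This models the extension of a Lie algebra
action on a vector space to an action on its symmetric algebra by derivations, where the
symmetric algebra of a finite-dimensional space with basis indexed by `σ` is modeled as
`MvPolynomial σ R`. -/
noncomputable def extDer {R : Type*} [CommSemiring R] {σ : Type*} [Fintype σ]
    (v : σ → MvPolynomial σ R) (p : MvPolynomial σ R) : MvPolynomial σ R :=
  ∑ j, v j * pderiv j p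

namespace MvPolynomial

variable {R σ : Type*} [CommRing R] [Fintype σ]

theorem eval_sum_mul_pderiv_mul_X [DecidableEq σ] (f g : σ → R) (p : MvPolynomial σ R) (i : σ) :
    ∑ j, g j * eval f (pderiv j (p * X i))
      = (∑ j, g j * eval f (pderiv j p)) * f i + g i * eval f p := by
  simp only [pderiv_mul, pderiv_X, map_add, eval_mul, eval_X, mul_add, Finset.sum_add_distrib,
    Pi.single_apply, apply_ite (eval f), map_zero, mul_ite, mul_zero, Finset.sum_ite_eq,
    Finset.mem_univ, if_true, Finset.sum_mul, mul_one, mul_assoc]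

theorem X_sq_dvd_aeval_C_add_X_mul_C_sub (f g : σ → R) (p : MvPolynomial σ R) :
    Polynomial.X ^ 2 ∣
      aeval (fun i => Polynomial.C (f i) + Polynomial.X * Polynomial.C (g i)) p
        - (Polynomial.C (eval f p)
            + Polynomial.X * Polynomial.C (∑ j, g j * eval f (pderiv j p))) := by
  classical
  induction p using MvPolynomial.induction_on with
  | C r => simp
  | add p q hp hq =>
    convert dvd_add hp hq using 1
    simp only [map_add, mul_add, Finset.sum_add_distrib]
    ring
  | mul_X p i hp =>
    convert dvd_add (hp.mul_right (Polynomial.C (f i) + Polynomial.X * Polynomial.C (g i)))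
      (dvd_mul_right (Polynomial.X ^ 2)
        (Polynomial.C ((∑ j, g j * eval f (pderiv j p)) * g i))) using 1
    rw [eval_sum_mul_pderiv_mul_X, map_mul, eval_mul, eval_X, aeval_X]
    simp only [Polynomial.C_add, Polynomial.C_mul]
    ring

theorem eval_extDer (f : σ → R) (v : σ → MvPolynomial σ R) (p : MvPolynomial σ R) :
    eval f (extDer v p) = ∑ j, eval f (v j) * eval f (pderiv j p) := by
  simp only [extDer, map_sum, eval_mul]

end MvPolynomial

theorem Module.Basis.eval_sum_repr_smul_X {K M B ι : Type*} [Field K] [AddCommGroup M]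
    [Module K M] [CommRing B] [Algebra K B] [Fintype ι] (e : Module.Basis ι K M)
    (φ : M →ₗ[K] B) (y : M) :
    eval (fun i => φ (e i)) (∑ j, e.repr y j • (X j : MvPolynomial ι B)) = φ y := by
  conv_rhs => rw [← e.sum_repr y, map_sum]
  simp [map_sum, Algebra.smul_def]

theorem eval_sum_C_mul_extDer_ad_eq_neg {F a B ι : Type*} [Field F] [LieRing a] [LieAlgebra F a]
    [CommRing B] [Algebra F B] [Fintype ι] (ba : Module.Basis ι F a) (Fm : a →ₗ[F] B)
    {n : ℕ} (x : Fin n → a) (b : Fin n → B) (P : MvPolynomial ι B) :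
    eval (fun i => Fm (ba i)) (∑ m, C (b m) *
      extDer (fun j => ∑ j', (ba.repr ⁅x m, ba j⁆ j') • (X j' : MvPolynomial ι B)) P)
      = -∑ j, (∑ m, b m * Fm ⁅ba j, x m⁆) * eval (fun i => Fm (ba i)) (pderiv j P) := by
  simp only [map_sum, eval_mul, eval_C, eval_extDer, ba.eval_sum_repr_smul_X, Finset.mul_sum,
    Finset.sum_mul, ← Finset.sum_neg_distrib]
  rw [Finset.sum_comm]
  refine Finset.sum_congr rfl fun j _ => Finset.sum_congr rfl fun m _ => ?_
  rw [← lie_skew, map_neg]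
  ring

theorem statement0_general {F : Type*} [Field F]
    {a : Type*} [LieRing a] [LieAlgebra F a]
    {B : Type*} [CommRing B] [Algebra F B]
    {ι : Type*} [Fintype ι] (ba : Module.Basis ι F a)
    (n : ℕ) (x : Fin n → a) (b : Fin n → B)
    (Fm : a →ₗ[F] B)
    (P : MvPolynomial ι B)
    -- `XF` is the element `X · F` of `a* ⊗ B`, viewed as a linear map `a → B`:
    (XF : a → B) (hXF : XF = fun y => ∑ m, b m * Fm ⁅y, x m⁆)
    -- `XP` is the element `X · P` of `S(a) ⊗ B`:
    (XP : MvPolynomial ι B)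
    (hXP : XP = ∑ m, C (b m) *
      extDer (fun j => ∑ j', (ba.repr ⁅x m, ba j⁆ j') • (X j' : MvPolynomial ι B)) P) :
    ∃ Q : Polynomial B,
      aeval (fun i => Polynomial.C (Fm (ba i)) + Polynomial.X * Polynomial.C (XF (ba i))) P
        - (Polynomial.C (eval (fun i => Fm (ba i)) P)
            - Polynomial.X * Polynomial.C (eval (fun i => Fm (ba i)) XP))
      = Polynomial.X ^ 2 * Q := by
  obtain ⟨Q, hQ⟩ := X_sq_dvd_aeval_C_add_X_mul_C_sub (fun i => Fm (ba i)) (fun i => XF (ba i)) P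
  refine ⟨Q, ?_⟩
  rw [← hQ, hXP, eval_sum_C_mul_extDer_ad_eq_neg, hXF, Polynomial.C_neg]
  ring

/-- Let `a` be a finite-dimensional Lie algebra over a field `F` of
characteristic zero (with basis `ba` indexed by `ι`, so that `S(a)` is modeled as
`MvPolynomial ι F` with the variable `X j` corresponding to `ba j`, and `S(a) ⊗ B` as
`MvPolynomial ι B`), let `B` be a commutative associative unital `F`-algebra and `s` an
indeterminate.  For all `P ∈ S(a) ⊗ B`, `F ∈ a* ⊗ B` (modeled, via finite-dimensionality
of `a`, as a linear map `Fm : a →ₗ[F] B`) and `X = ∑ m, x m ⊗ b m ∈ a ⊗ B`, one has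
`P(F + s (X·F)) ≡ P(F) - s (X·P)(F) mod s² B[s]`, both sides computed in `B[s]`.
Here `X·F ∈ a* ⊗ B` is the coadjoint action, `(x ⊗ b₁)·(f ⊗ b₂) = (x·f) ⊗ b₁b₂` with
`(x·f)(y) = f ⁅y, x⁆`, and `X·P ∈ S(a) ⊗ B` is the action extending the adjoint action by
derivations, `(x ⊗ b₁)·(p ⊗ b₂) = (x·p) ⊗ b₁b₂`. -/
theorem statement0 {F : Type*} [Field F] [CharZero F]
    {a : Type*} [LieRing a] [LieAlgebra F a] [FiniteDimensional F a]
    {B : Type*} [CommRing B] [Algebra F B]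
    {ι : Type*} [Fintype ι] (ba : Module.Basis ι F a)
    (n : ℕ) (x : Fin n → a) (b : Fin n → B)
    (Fm : a →ₗ[F] B)
    (P : MvPolynomial ι B)
    -- `XF` is the element `X · F` of `a* ⊗ B`, viewed as a linear map `a → B`:
    (XF : a → B) (hXF : XF = fun y => ∑ m, b m * Fm ⁅y, x m⁆)
    -- `XP` is the element `X · P` of `S(a) ⊗ B`:
    (XP : MvPolynomial ι B)
    (hXP : XP = ∑ m, C (b m) *
      extDer (fun j => ∑ j', (ba.repr ⁅x m, ba j⁆ j') • (X j' : MvPolynomial ι B)) P) :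
    ∃ Q : Polynomial B,
      aeval (fun i => Polynomial.C (Fm (ba i)) + Polynomial.X * Polynomial.C (XF (ba i))) P
        - (Polynomial.C (eval (fun i => Fm (ba i)) P)
            - Polynomial.X * Polynomial.C (eval (fun i => Fm (ba i)) XP))
      = Polynomial.X ^ 2 * Q :=
  statement0_general ba n x b Fm P XF hXF XP hXP
end

section
/- For every p ∈ S(g) and every F ∈ g*⊗A*, one has p(ȷ(F)) = Σ_{γ∈ℕ^ℓ} p_γ(F)·q^{−γ} in F[Γ], where p(ȷ(F)) is the value at ȷ(F) of p viewed as a polynomial function on g*⊗F[Γ] with values in F[Γ], and p_γ(F) ∈ F is the evaluation of p_γ ∈ S(g⊗A) at F ∈ (g⊗A)* ≅ g*⊗A*. -/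
open MvPolynomial

/-- Coercion of a multi-exponent in `ℕ^ℓ` to `ℤ^ℓ`. -/
def zc {ℓ : ℕ} (ω : Fin ℓ → ℕ) : Fin ℓ → ℤ := fun k => (ω k : ℤ)

/-- The algebra homomorphism `τ_a : S(g) → S(g ⊗ A)` induced by `x ↦ x ⊗ a` where
`a = ∑_{ω ∈ Ω₁} τ^ω`.  Here `S(g)` is modeled as `MvPolynomial ι F` (the variable `X i`
corresponding to the basis vector `bg i` of `g`) and `S(g ⊗ A)` as
`MvPolynomial (ι × Ω₁) F` (the variable `X (i, ω)` corresponding to `bg i ⊗ τ^ω`,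
where `{τ^ω : ω ∈ Ω₁}` is the monomial basis of `A = F[t₁,…,t_ℓ]/⟨t^ω : ω ∈ Ω₀⟩`). -/
noncomputable def tauA (F : Type*) [Field F] {ℓ : ℕ} (Ω₁ : Finset (Fin ℓ → ℕ))
    (ι : Type*) : MvPolynomial ι F →ₐ[F] MvPolynomial (ι × ↥Ω₁) F :=
  aeval (fun i => ∑ ω : ↥Ω₁, X (i, ω))

/-- `pComp F Ω₁ p γ` is the component `p_γ` of `τ_a(p)` of degree `γ ∈ ℤ^ℓ`, with respect
to the `ℤ^ℓ`-grading of `S(g ⊗ A)` induced by that of `A` (the variable `X (i, ω)`,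
corresponding to `bg i ⊗ τ^ω`, has degree `ω`). -/
noncomputable def pComp (F : Type*) [Field F] {ℓ : ℕ} (Ω₁ : Finset (Fin ℓ → ℕ))
    {ι : Type*} (p : MvPolynomial ι F) (γ : Fin ℓ → ℤ) : MvPolynomial (ι × ↥Ω₁) F :=
  weightedHomogeneousComponent (fun z : ι × ↥Ω₁ => zc (z.2 : Fin ℓ → ℕ)) γ (tauA F Ω₁ ι p)

/-!
Evaluating the variable `z` of weight `w z` at `q^{-w z} · v z` sends a monomial of weighted
degree `d` to `q^{-d}` times its value at `v`, so evaluation at such a point splits a polynomial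
into its weighted homogeneous components. Evaluation at `ȷ(F)` is `τ_a` followed by such an
evaluation (the variable `bg i ⊗ τ^ω` has weight `ω` and value `f ω (bg i)`), and since all
weights lie in `ℕ^ℓ`, only components of degree in `ℕ^ℓ` can be nonzero.
-/

theorem finsum_eq_finsum_comp_of_support_subset_range {α β M : Type*} [AddCommMonoid M]
    {f : α → M} {g : β → α} (hg : g.Injective) (hf : f.support ⊆ Set.range g) :
    ∑ᶠ a, f a = ∑ᶠ b, f (g b) := by
  rw [← finsum_mem_range hg, ← finsum_mem_univ]
  exact finsum_mem_inter_support_eq f _ _ (by rw [Set.univ_inter, Set.inter_eq_right.mpr hf])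

namespace MvPolynomial

open AddMonoidAlgebra

section WeightedEvaluation

variable {σ R M : Type*} [CommSemiring R]

theorem aeval_single_monomial [AddCommMonoid M] (w : σ → M) (v : σ → R) (e : σ →₀ ℕ) (c : R) :
    aeval (fun z => single (w z) (v z)) (monomial e c)
      = single (Finsupp.weight w e) (eval v (monomial e c)) := by
  simp only [aeval_monomial, eval_monomial, Finsupp.prod, single_pow, prod_single,
    coe_algebraMap, Function.comp_apply, Algebra.algebraMap_self_apply, single_mul_single,
    zero_add, Finsupp.weight_apply, Finsupp.sum]

theorem IsWeightedHomogeneous.aeval_single [AddCommMonoid M] {w : σ → M} (v : σ → R) {d : M}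
    {r : MvPolynomial σ R} (hr : r.IsWeightedHomogeneous w d) :
    aeval (fun z => single (w z) (v z)) r = single d (eval v r) := by
  conv_lhs => rw [r.as_sum]
  conv_rhs => rw [r.as_sum, map_sum]
  change _ = singleAddHom d _
  rw [map_sum, map_sum]
  refine Finset.sum_congr rfl fun e he => ?_
  rw [aeval_single_monomial, hr (mem_support_iff.mp he)]
  rfl

theorem aeval_single_eq_finsum [AddCommMonoid M] (w : σ → M) (v : σ → R) (r : MvPolynomial σ R) :
    aeval (fun z => single (w z) (v z)) r
      = ∑ᶠ d, single d (eval v (weightedHomogeneousComponent w d r)) := by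
  conv_lhs => rw [← sum_weightedHomogeneousComponent w r]
  rw [map_finsum _ (weightedHomogeneousComponent_finsupp r)]
  exact finsum_congr fun d =>
    (weightedHomogeneousComponent_isWeightedHomogeneous d r).aeval_single v

theorem weightedHomogeneousComponent_neg [AddCommGroup M] (w : σ → M) (d : M)
    (φ : MvPolynomial σ R) :
    weightedHomogeneousComponent (-w) (-d) φ = weightedHomogeneousComponent w d φ := by
  classical
  ext e
  simp [coeff_weightedHomogeneousComponent, Finsupp.weight_apply, Finsupp.sum]

theorem aeval_single_neg_eq_finsum [AddCommGroup M] (w : σ → M) (v : σ → R)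
    (r : MvPolynomial σ R) :
    aeval (fun z => single (-w z) (v z)) r
      = ∑ᶠ d, single (-d) (eval v (weightedHomogeneousComponent w d r)) := by
  rw [show (fun z => single (-w z) (v z)) = fun z => single ((-w) z) (v z) from rfl,
    aeval_single_eq_finsum, ← finsum_comp_equiv (Equiv.neg M)]
  simp [weightedHomogeneousComponent_neg]

theorem weightedHomogeneousComponent_eq_zero_of_not_nonneg [AddCommMonoid M] [PartialOrder M]
    [IsOrderedAddMonoid M] {w : σ → M} (hw : ∀ z, 0 ≤ w z) {d : M} (hd : ¬0 ≤ d)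
    (φ : MvPolynomial σ R) : weightedHomogeneousComponent w d φ = 0 :=
  weightedHomogeneousComponent_eq_zero' d φ fun _ _ he =>
    hd (he ▸ Finset.sum_nonneg fun z _ => nsmul_nonneg (hw z) _)

end WeightedEvaluation

end MvPolynomial

theorem zc_injective {ℓ : ℕ} : (zc (ℓ := ℓ)).Injective := fun _ _ h =>
  funext fun k => Nat.cast_injective (congrFun h k)

theorem range_zc {ℓ : ℕ} : Set.range (zc (ℓ := ℓ)) = Set.Ici 0 := by
  ext d
  refine ⟨?_, fun hd => ⟨fun k => (d k).toNat, funext fun k => Int.toNat_of_nonneg (hd k)⟩⟩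
  rintro ⟨γ, rfl⟩ k
  exact Int.natCast_nonneg _

theorem aeval_tauA {F : Type*} [Field F] {ℓ : ℕ} {Ω₁ : Finset (Fin ℓ → ℕ)} {ι S : Type*}
    [CommSemiring S] [Algebra F S] (x : ι × ↥Ω₁ → S) (p : MvPolynomial ι F) :
    aeval x (tauA F Ω₁ ι p) = aeval (fun i => ∑ ω : ↥Ω₁, x (i, ω)) p := by
  rw [tauA, ← AlgHom.comp_apply, comp_aeval]
  simp only [map_sum, aeval_X]

theorem statement1_general {F : Type*} [Field F] {ℓ : ℕ}
    (Ω₁ : Finset (Fin ℓ → ℕ))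
    {g : Type*} [LieRing g] [LieAlgebra F g]
    {ι : Type*} (bg : Module.Basis ι F g)
    (p : MvPolynomial ι F) (f : ↥Ω₁ → Module.Dual F g) :
    aeval (fun i => ∑ ω : ↥Ω₁,
        AddMonoidAlgebra.single (-(zc (ω : Fin ℓ → ℕ))) (f ω (bg i))) p
      = ∑ᶠ γ : Fin ℓ → ℕ, AddMonoidAlgebra.single (-(zc γ))
          (eval (fun z : ι × ↥Ω₁ => f z.2 (bg z.1)) (pComp F Ω₁ p (zc γ))) := by
  set w : ι × ↥Ω₁ → Fin ℓ → ℤ := fun z => zc (z.2 : Fin ℓ → ℕ)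
  set v : ι × ↥Ω₁ → F := fun z => f z.2 (bg z.1)
  have hsupp : (fun d => AddMonoidAlgebra.single (-d)
      (eval v (weightedHomogeneousComponent w d (tauA F Ω₁ ι p)))).support ⊆ Set.range zc := by
    rw [range_zc]
    intro d hd
    by_contra hneg
    refine hd ?_
    dsimp only
    rw [weightedHomogeneousComponent_eq_zero_of_not_nonneg (fun _ _ => Int.natCast_nonneg _) hneg]
    simp
  rw [← aeval_tauA (fun z => AddMonoidAlgebra.single (-w z) (v z)), aeval_single_neg_eq_finsum,
    finsum_eq_finsum_comp_of_support_subset_range zc_injective hsupp]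
  rfl

/-- For every `p ∈ S(g)` and every `F ∈ g* ⊗ A*` (written
`F = ∑_{ω ∈ Ω₁} f ω ⊗ ε^ω` in terms of the dual basis `{ε^ω}` of `A*`), one has
`p(ȷ(F)) = ∑_{γ ∈ ℕ^ℓ} p_γ(F) q^{-γ}` in the group algebra `F[Γ] = F[ℤ^ℓ]`.
Here `ȷ : g* ⊗ A* → g* ⊗ F[Γ]` sends `f ⊗ ε^ω ↦ f ⊗ q^{-ω}`, `p(ȷ(F))` is the value
at `ȷ(F)` of `p` viewed as a polynomial function on `g* ⊗ F[Γ]` with values in `F[Γ]`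
(an element of `g* ⊗ F[Γ]` induces an algebra homomorphism `S(g) → F[Γ]` determined by
`x ↦ ∑ᵢ fᵢ(x) bᵢ`), and `p_γ(F) ∈ F` is the evaluation of `p_γ ∈ S(g ⊗ A)` at
`F ∈ (g ⊗ A)* ≅ g* ⊗ A*` (so the variable corresponding to `bg i ⊗ τ^ω` takes the value
`f ω (bg i)`).  The group algebra `F[ℤ^ℓ]` is modeled as `AddMonoidAlgebra F (Fin ℓ → ℤ)`
with `q^γ = AddMonoidAlgebra.single γ 1`, so that `c • q^{-γ} = AddMonoidAlgebra.single (-γ) c`. -/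
theorem statement1 {F : Type*} [Field F] [CharZero F] {ℓ : ℕ}
    (Ω₁ : Finset (Fin ℓ → ℕ))
    (hstab : ∀ ω γ : Fin ℓ → ℕ, ω ∉ Ω₁ → ω + γ ∉ Ω₁)
    {g : Type*} [LieRing g] [LieAlgebra F g] [FiniteDimensional F g]
    {ι : Type*} [Fintype ι] (bg : Module.Basis ι F g)
    (p : MvPolynomial ι F) (f : ↥Ω₁ → Module.Dual F g) :
    aeval (fun i => ∑ ω : ↥Ω₁,
        AddMonoidAlgebra.single (-(zc (ω : Fin ℓ → ℕ))) (f ω (bg i))) p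
      = ∑ᶠ γ : Fin ℓ → ℕ, AddMonoidAlgebra.single (-(zc γ))
          (eval (fun z : ι × ↥Ω₁ => f z.2 (bg z.1)) (pComp F Ω₁ p (zc γ))) :=
  statement1_general Ω₁ bg p f
end

section
/- Assume Ω₁ has a greatest element μ. Let ν = (μ₁,…,μ_{ℓ−1}) and B = F[t₁,…,t_{ℓ−1}]/⟨t^ω : ω ≰ ν⟩, and identify A with B⊗F[t_ℓ]/(t_ℓ^{μ_ℓ+1}). Then for every p ∈ S(g) and every γ = (γ₁,…,γ_ℓ) ∈ ℕ^ℓ, one has (p_{(γ₁,…,γ_{ℓ−1})})_{γ_ℓ} = p_γ, where p_{(γ₁,…,γ_{ℓ−1})} ∈ S(g⊗B) is formed by the same construction applied to g and B, and the outer subscript is the construction applied to the finite-dimensional Lie algebra g⊗B and the truncated polynomial ring F[t_ℓ]/(t_ℓ^{μ_ℓ+1}). -/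
open MvPolynomial

/-- The algebra homomorphism `S(h) → S(h ⊗ C)` induced by `x ↦ x ⊗ c`, where
`C = F[t₁,…,t_n]/⟨t^ω : ω ≰ μ⟩` is the truncated polynomial algebra with monomial basis
`{τ^ω : ω ≤ μ}` (indexed by `∀ k, Fin (μ k + 1)`) and `c = ∑_{ω ≤ μ} τ^ω`.  Here `S(h)`
is modeled as `MvPolynomial σ F` (variables indexed by a basis of `h`) and `S(h ⊗ C)` as
`MvPolynomial (σ × ∀ k, Fin (μ k + 1)) F` (the variable `X (s, ω)` corresponding to the
basis vector `s ⊗ τ^ω`). -/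
noncomputable def tauMul {F : Type*} [Field F] {σ : Type*} {n : ℕ} (μ : Fin n → ℕ) :
    MvPolynomial σ F →ₐ[F] MvPolynomial (σ × (∀ k, Fin (μ k + 1))) F :=
  aeval fun s => ∑ ω : ∀ k, Fin (μ k + 1), X (s, ω)

/-- `compMul μ p γ` is the component `p_γ` of degree `γ ∈ ℕ^n` of the image of `p` under
`tauMul μ`, with respect to the `ℕ^n`-grading in which `X (s, ω)` has degree `ω`. -/
noncomputable def compMul {F : Type*} [Field F] {σ : Type*} {n : ℕ} (μ : Fin n → ℕ)
    (p : MvPolynomial σ F) (γ : Fin n → ℕ) : MvPolynomial (σ × (∀ k, Fin (μ k + 1))) F :=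
  weightedHomogeneousComponent (fun z : σ × (∀ k, Fin (μ k + 1)) => fun k => (z.2 k : ℕ))
    γ (tauMul μ p)

/-- The one-variable (`n = 1`) version of `tauMul`:
the homomorphism `S(h) → S(h ⊗ F[t]/(t^{m+1}))`. -/
noncomputable def tauOne {F : Type*} [Field F] {σ : Type*} (m : ℕ) :
    MvPolynomial σ F →ₐ[F] MvPolynomial (σ × Fin (m + 1)) F :=
  aeval fun s => ∑ j : Fin (m + 1), X (s, j)

/-- The one-variable version of `compMul`: the degree-`d` component for the `ℕ`-grading. -/
noncomputable def compOne {F : Type*} [Field F] {σ : Type*} (m : ℕ)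
    (p : MvPolynomial σ F) (d : ℕ) : MvPolynomial (σ × Fin (m + 1)) F :=
  weightedHomogeneousComponent (fun z : σ × Fin (m + 1) => (z.2 : ℕ)) d (tauOne m p)

/-- The bijection of variable-index sets realizing the identification
`A ≅ B ⊗ F[t_ℓ]/(t_ℓ^{μ_ℓ+1})`, where `A` has monomial basis indexed by `ω ≤ μ`
(`ω ∈ ℕ^{ℓ+1}`) and `B` has monomial basis indexed by `ω' ≤ (μ₁,…,μ_ℓ)`. -/
def snocEquiv {σ : Type*} {ℓ : ℕ} (μ : Fin (ℓ + 1) → ℕ) :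
    ((σ × (∀ k : Fin ℓ, Fin (Fin.init μ k + 1))) × Fin (μ (Fin.last ℓ) + 1))
      ≃ (σ × (∀ k : Fin (ℓ + 1), Fin (μ k + 1))) where
  toFun z := (z.1.1, Fin.snoc z.1.2 z.2)
  invFun z := ((z.1, fun k => z.2 k.castSucc), z.2 (Fin.last ℓ))
  left_inv z := by
    obtain ⟨⟨s, ω⟩, d⟩ := z
    simp
    first
      | exact ⟨Prod.ext rfl (funext fun k => Fin.snoc_castSucc ..), Fin.snoc_last ..⟩
      | exact ⟨Prod.ext rfl (funext fun k => Fin.snoc_castSucc (α := fun k => Fin (μ k + 1)) ..),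
          Fin.snoc_last (α := fun k => Fin (μ k + 1)) ..⟩
  right_inv z := by
    obtain ⟨s, ω⟩ := z
    exact congrArg (Prod.mk s) (Fin.snoc_init_self ω)

/-!
Up to the renaming `snocEquiv μ`, substituting `x ↦ ∑_{ω'} x ⊗ τ^{ω'}` and then
`y ↦ ∑_j y ⊗ t^j` is the substitution `x ↦ ∑_ω x ⊗ τ^ω`. The second substitution sends every
variable to an element of the same `ℕ^ℓ`-degree, so it commutes with taking the degree-`γ'`
component; and a component for the bigrading by `ℕ^ℓ × ℕ` is a component for the
`ℕ^{ℓ+1}`-grading, since `f ↦ (Fin.init f, f (Fin.last ℓ))` is an injective additive map.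
-/

theorem Finsupp.weight_comp_addMonoidHom {σ M N : Type*} [AddCommMonoid M] [AddCommMonoid N]
    (φ : M →+ N) (w : σ → M) (x : σ →₀ ℕ) :
    Finsupp.weight (φ ∘ w) x = φ (Finsupp.weight w x) := by
  induction x using Finsupp.induction_linear with
  | zero => simp
  | add x y hx hy => simp only [map_add, hx, hy]
  | single s n => simp [Finsupp.weight_single]

namespace MvPolynomial

variable {R σ τ M N : Type*} [CommSemiring R] [AddCommMonoid M] [AddCommMonoid N]

theorem weightedHomogeneousComponent_comp_addMonoidHom [DecidableEq M] [DecidableEq N]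
    (φ : M →+ N) (hφ : Function.Injective φ) (w : σ → M) (m : M) (q : MvPolynomial σ R) :
    weightedHomogeneousComponent (φ ∘ w) (φ m) q = weightedHomogeneousComponent w m q := by
  ext x
  simp only [coeff_weightedHomogeneousComponent, Finsupp.weight_comp_addMonoidHom, hφ.eq_iff]

theorem weightedHomogeneousComponent_weightedHomogeneousComponent [DecidableEq M]
    [DecidableEq N] (w₁ : σ → M) (w₂ : σ → N) (m₁ : M) (m₂ : N) (q : MvPolynomial σ R) :
    weightedHomogeneousComponent w₂ m₂ (weightedHomogeneousComponent w₁ m₁ q) =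
      weightedHomogeneousComponent (fun s => (w₁ s, w₂ s)) (m₁, m₂) q := by
  ext x
  have h₁ : Finsupp.weight w₁ x = (Finsupp.weight (fun s => (w₁ s, w₂ s)) x).1 :=
    Finsupp.weight_comp_addMonoidHom (AddMonoidHom.fst M N) (fun s => (w₁ s, w₂ s)) x
  have h₂ : Finsupp.weight w₂ x = (Finsupp.weight (fun s => (w₁ s, w₂ s)) x).2 :=
    Finsupp.weight_comp_addMonoidHom (AddMonoidHom.snd M N) (fun s => (w₁ s, w₂ s)) x
  simp only [coeff_weightedHomogeneousComponent, Prod.ext_iff, ite_and, h₁, h₂]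
  split_ifs <;> rfl

theorem isWeightedHomogeneous_aeval_monomial {w : σ → M} {w' : τ → M}
    {v : σ → MvPolynomial τ R} (hv : ∀ s, (v s).IsWeightedHomogeneous w' (w s))
    (e : σ →₀ ℕ) (r : R) :
    (aeval v (monomial e r)).IsWeightedHomogeneous w' (Finsupp.weight w e) := by
  rw [aeval_monomial, Finsupp.weight_apply, Finsupp.prod, Finsupp.sum,
    ← zero_add (Finset.sum _ _)]
  exact (isWeightedHomogeneous_C w' _).mul
    (IsWeightedHomogeneous.prod _ _ _ fun s _ => (hv s).pow (e s))

theorem weightedHomogeneousComponent_aeval [DecidableEq M] {w : σ → M} {w' : τ → M}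
    {v : σ → MvPolynomial τ R} (hv : ∀ s, (v s).IsWeightedHomogeneous w' (w s)) (m : M)
    (q : MvPolynomial σ R) :
    weightedHomogeneousComponent w' m (aeval v q) =
      aeval v (weightedHomogeneousComponent w m q) := by
  induction q using MvPolynomial.induction_on' with
  | add p q hp hq => simp only [map_add, hp, hq]
  | monomial e r =>
    have hmon : (monomial e r).IsWeightedHomogeneous w (Finsupp.weight w e) :=
      isWeightedHomogeneous_monomial _ _ _ rfl
    have haeval := isWeightedHomogeneous_aeval_monomial hv e r
    obtain rfl | hne := eq_or_ne (Finsupp.weight w e) m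
    · rw [haeval.weightedHomogeneousComponent_same, hmon.weightedHomogeneousComponent_same]
    · rw [haeval.weightedHomogeneousComponent_ne m hne.symm,
        hmon.weightedHomogeneousComponent_ne m hne.symm, map_zero]

theorem weightedHomogeneousComponent_rename [DecidableEq M] (f : σ → τ) (w : τ → M) (m : M)
    (q : MvPolynomial σ R) :
    weightedHomogeneousComponent w m (rename f q) =
      rename f (weightedHomogeneousComponent (w ∘ f) m q) := by
  rw [rename_eq_aeval]
  exact weightedHomogeneousComponent_aeval (fun s => isWeightedHomogeneous_X R w (f s)) m q

end MvPolynomial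

def initLastAddMonoidHom (n : ℕ) (M : Type*) [AddMonoid M] :
    (Fin (n + 1) → M) →+ (Fin n → M) × M where
  toFun f := (Fin.init f, f (Fin.last n))
  map_zero' := rfl
  map_add' _ _ := rfl

theorem initLastAddMonoidHom_injective (n : ℕ) (M : Type*) [AddMonoid M] :
    Function.Injective (initLastAddMonoidHom n M) := fun f g h => by
  rw [← Fin.snoc_init_self f, ← Fin.snoc_init_self g]
  exact congrArg₂ _ (congrArg Prod.fst h) (congrArg Prod.snd h)

theorem tauMul_eq_rename_tauOne_tauMul {F σ : Type*} [Field F] {ℓ : ℕ} (μ : Fin (ℓ + 1) → ℕ)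
    (q : MvPolynomial σ F) :
    tauMul μ q = rename (snocEquiv μ) (tauOne (μ (Fin.last ℓ)) (tauMul (Fin.init μ) q)) := by
  suffices tauMul μ = ((rename (snocEquiv μ)).comp (tauOne (μ (Fin.last ℓ)))).comp
      (tauMul (Fin.init μ)) from DFunLike.congr_fun this q
  refine MvPolynomial.algHom_ext fun s => ?_
  simp only [AlgHom.comp_apply, tauMul, tauOne, aeval_X, map_sum, rename_X]
  rw [← (Fin.snocEquiv fun k => Fin (μ k + 1)).sum_comp, Fintype.sum_prod_type, Finset.sum_comm]
  rfl

theorem compOne_compMul {F σ : Type*} [Field F] {n : ℕ} (ν : Fin n → ℕ) (m : ℕ)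
    (p : MvPolynomial σ F) (γ : Fin n → ℕ) (d : ℕ) :
    compOne m (compMul ν p γ) d =
      weightedHomogeneousComponent (fun z => (fun k => (z.1.2 k : ℕ), (z.2 : ℕ))) (γ, d)
        (tauOne m (tauMul ν p)) := by
  have hv : ∀ s : σ × ∀ k, Fin (ν k + 1),
      (∑ j : Fin (m + 1), X (s, j) : MvPolynomial _ F).IsWeightedHomogeneous
        (fun z => fun k => (z.1.2 k : ℕ)) (fun k => (s.2 k : ℕ)) :=
    fun s => IsWeightedHomogeneous.sum _ _ _ fun j _ => isWeightedHomogeneous_X _ _ _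
  rw [compOne, compMul, tauOne, ← weightedHomogeneousComponent_aeval hv,
    weightedHomogeneousComponent_weightedHomogeneousComponent]

theorem statement2_general {F : Type*} [Field F]
    {ι : Type*}
    {ℓ : ℕ} (μ : Fin (ℓ + 1) → ℕ)
    (p : MvPolynomial ι F) (γ : Fin (ℓ + 1) → ℕ) :
    rename (snocEquiv μ)
        (compOne (μ (Fin.last ℓ)) (compMul (Fin.init μ) p (Fin.init γ)) (γ (Fin.last ℓ)))
      = compMul μ p γ := by
  have hweight : initLastAddMonoidHom ℓ ℕ ∘ (fun z k => (z.2 k : ℕ)) ∘ snocEquiv (σ := ι) μ =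
      fun z => (fun k => (z.1.2 k : ℕ), (z.2 : ℕ)) := by
    funext z
    exact Prod.ext
      (funext fun k => congrArg Fin.val (Fin.snoc_castSucc (α := fun k => Fin (μ k + 1)) ..))
      (congrArg Fin.val (Fin.snoc_last (α := fun k => Fin (μ k + 1)) ..))
  rw [compOne_compMul, compMul, tauMul_eq_rename_tauOne_tauMul,
    weightedHomogeneousComponent_rename,
    ← weightedHomogeneousComponent_comp_addMonoidHom _ (initLastAddMonoidHom_injective ℓ ℕ),
    hweight]
  rfl

/-- Assume `Ω₁ = {ω ∈ ℕ^{ℓ+1} : ω ≤ μ}` has greatest element `μ`, so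
that `A ≅ B ⊗ F[t_{ℓ+1}]/(t_{ℓ+1}^{μ_{ℓ+1}+1})` where `B` is the truncated algebra for
`ν = Fin.init μ = (μ₁,…,μ_ℓ)`.  Then for every `p ∈ S(g)` and every
`γ ∈ ℕ^{ℓ+1}`, one has `(p_{(γ₁,…,γ_ℓ)})_{γ_{ℓ+1}} = p_γ`, where `p_{(γ₁,…,γ_ℓ)} ∈ S(g ⊗ B)`
is formed by the same construction applied to `g` and `B`, and the outer subscript is the
construction applied to the finite-dimensional Lie algebra `g ⊗ B` and the truncated
polynomial ring `F[t_{ℓ+1}]/(t_{ℓ+1}^{μ_{ℓ+1}+1})`.  The two sides are compared via the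
renaming of variables `snocEquiv μ` realizing the identification of `A` with
`B ⊗ F[t_{ℓ+1}]/(t_{ℓ+1}^{μ_{ℓ+1}+1})`. -/
theorem statement2 {F : Type*} [Field F] [CharZero F]
    {g : Type*} [LieRing g] [LieAlgebra F g] [FiniteDimensional F g]
    {ι : Type*} [Fintype ι] (bg : Module.Basis ι F g)
    {ℓ : ℕ} (μ : Fin (ℓ + 1) → ℕ)
    (p : MvPolynomial ι F) (γ : Fin (ℓ + 1) → ℕ) :
    rename (snocEquiv μ)
        (compOne (μ (Fin.last ℓ)) (compMul (Fin.init μ) p (Fin.init γ)) (γ (Fin.last ℓ)))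
      = compMul μ p γ :=
  statement2_general μ p γ
end

section
/- Suppose p ∈ S^k(g) for some k ≥ 1. Then for all F ∈ g*⊗span_F{q^γ : γ ∈ −Ω₁} and G ∈ g*⊗span_F{q^γ : γ ∈ (Ω₁−Ω₁)\(−Ω₁)}, the difference p(F+G) − p(F) lies in span_F{q^γ : γ ∈ Φ_k} ⊆ F[Γ]. -/
open MvPolynomial

/-- The sum of two subsets of an additive monoid. -/
def setAdd {M : Type*} [Add M] (S T : Set M) : Set M := {x | ∃ a ∈ S, ∃ b ∈ T, x = a + b}

/-- The `j`-fold sumset `S^j` of a subset `S` of an additive monoid (with `S^0 = {0}`). -/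
def nfoldSum {M : Type*} [AddMonoid M] (S : Set M) : ℕ → Set M
  | 0 => {0}
  | n + 1 => setAdd S (nfoldSum S n)

/-!
Writing `P` and `Q` for the spans of the `q^γ` with `γ ∈ -Ω₁` and `γ ∈ (Ω₁ - Ω₁) \ (-Ω₁)`,
the span of `q^γ` over a sumset is the product of the spans, so the claim is that
`p(F + G) - p(F)` lies in `⨆_{1 ≤ j ≤ k} Q^j P^(k-j)`. By linearity it suffices to treat a
monomial `∏ᵢ xᵢ` of degree `k`. Expanding `∏ᵢ (Fxᵢ + Gxᵢ)` over the splittings of the factors,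
the term taking no factor from `G` is exactly `∏ᵢ Fxᵢ`, and a term taking `j ≥ 1` factors from
`G` lies in `Q^j P^(k-j)`.
-/

theorem Finsupp.prod_pow_eq_prod_map_toMultiset {σ M : Type*} [CommMonoid M] (d : σ →₀ ℕ)
    (x : σ → M) : (d.prod fun i n => x i ^ n) = (d.toMultiset.map x).prod := by
  rw [Finsupp.toMultiset_map, Finsupp.prod_toMultiset,
    Finsupp.prod_mapDomain_index (fun _ => pow_zero _) (fun _ _ _ => pow_add _ _ _)]

theorem Submodule.multiset_prod_map_mem_pow {K R ι : Type*} [CommSemiring K] [CommSemiring R]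
    [Algebra K R] (P : Submodule K R) {s : Multiset ι} {f : ι → R}
    (hf : ∀ i ∈ s, f i ∈ P) : (s.map f).prod ∈ P ^ Multiset.card s := by
  induction s using Multiset.induction with
  | empty => exact one_le.1 le_rfl
  | cons a s ih =>
    rw [Multiset.map_cons, Multiset.prod_cons, Multiset.card_cons, pow_succ']
    exact mul_mem_mul (hf a (Multiset.mem_cons_self a s))
      (ih fun i hi => hf i (Multiset.mem_cons_of_mem hi))

section SubmoduleProducts

variable {K R : Type*} [CommSemiring K] [CommRing R] [Algebra K R] (P Q : Submodule K R)

theorem Submodule.multiset_prod_map_add_sub_mem {ι : Type*} {s : Multiset ι} {f g : ι → R}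
    (hf : ∀ i ∈ s, f i ∈ P) (hg : ∀ i ∈ s, g i ∈ Q) :
    (s.map fun i => f i + g i).prod - (s.map f).prod ∈
      ⨆ j ∈ Finset.Icc 1 (Multiset.card s), Q ^ j * P ^ (Multiset.card s - j) := by
  -- expanding `∏ (f + 0)` in the same way, the terms with an empty `g`-part cancel
  have hf0 : (s.map f).prod = (s.map fun i => f i + (0 : ι → R) i).prod := by simp
  rw [hf0, Multiset.prod_map_add, Multiset.prod_map_add, ← Multiset.sum_map_sub]
  refine multiset_sum_mem _ fun z hz => ?_
  obtain ⟨⟨a, b⟩, hab, rfl⟩ := Multiset.mem_map.1 hz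
  rw [Multiset.mem_antidiagonal] at hab
  subst hab
  rcases Multiset.empty_or_exists_mem b with rfl | ⟨i, hi⟩
  · simp
  have hb : (b.map (0 : ι → R)).prod = 0 :=
    Multiset.prod_eq_zero (Multiset.mem_map.2 ⟨i, hi, rfl⟩)
  rw [hb, mul_zero, sub_zero, mul_comm]
  refine mem_iSup_of_mem (Multiset.card b) (mem_iSup_of_mem ?_ ?_)
  · have := Multiset.card_pos_iff_exists_mem.2 ⟨i, hi⟩
    simp only [Multiset.card_add, Finset.mem_Icc]
    omega
  · simp only [Multiset.card_add, Nat.add_sub_cancel]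
    exact mul_mem_mul
      (multiset_prod_map_mem_pow Q fun i hi => hg i (Multiset.mem_add.2 (Or.inr hi)))
      (multiset_prod_map_mem_pow P fun i hi => hf i (Multiset.mem_add.2 (Or.inl hi)))

theorem MvPolynomial.IsHomogeneous.aeval_add_sub_aeval_mem {σ : Type*} {p : MvPolynomial σ K}
    {k : ℕ} (hp : p.IsHomogeneous k) {x y : σ → R} (hx : ∀ i, x i ∈ P) (hy : ∀ i, y i ∈ Q) :
    MvPolynomial.aeval (fun i => x i + y i) p - MvPolynomial.aeval x p ∈
      ⨆ j ∈ Finset.Icc 1 k, Q ^ j * P ^ (k - j) := by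
  rw [← p.support_sum_monomial_coeff]
  simp only [map_sum, ← Finset.sum_sub_distrib, aeval_monomial, ← Algebra.smul_def, ← smul_sub]
  refine Submodule.sum_mem _ fun d hd => Submodule.smul_mem _ _ ?_
  have hdeg : Multiset.card d.toMultiset = k := by
    rw [Finsupp.card_toMultiset]
    exact not_not.1 fun h => mem_support_iff.1 hd (hp.coeff_eq_zero h)
  rw [Finsupp.prod_pow_eq_prod_map_toMultiset, Finsupp.prod_pow_eq_prod_map_toMultiset, ← hdeg]
  exact Submodule.multiset_prod_map_add_sub_mem P Q (fun i _ => hx i) (fun i _ => hy i)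

end SubmoduleProducts

section SupportedSumset

open AddMonoidAlgebra

variable {K M : Type*} [CommSemiring K]

theorem AddMonoidAlgebra.supported_biUnion {ι : Type*} (s : Finset ι) (S : ι → Set M) :
    supported K K (⋃ j ∈ s, S j) = ⨆ j ∈ s, supported K K (S j) := by
  simp only [supported_eq_span_single, Set.image_iUnion₂, Submodule.span_iUnion₂]

variable [AddMonoid M]

theorem AddMonoidAlgebra.supported_setAdd (S T : Set M) :
    supported K K (setAdd S T) = supported K K S * supported K K T := by
  simp only [supported_eq_span_single, Submodule.span_mul_span]
  congr 1
  ext z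
  simp only [Set.mem_image, Set.mem_mul, setAdd, Set.mem_ofPred_eq]
  constructor
  · rintro ⟨_, ⟨a, ha, b, hb, rfl⟩, rfl⟩
    exact ⟨_, ⟨a, ha, rfl⟩, _, ⟨b, hb, rfl⟩, by rw [single_mul_single, mul_one]⟩
  · rintro ⟨_, ⟨a, ha, rfl⟩, _, ⟨b, hb, rfl⟩, rfl⟩
    exact ⟨a + b, ⟨a, ha, b, hb, rfl⟩, by rw [single_mul_single, mul_one]⟩

theorem AddMonoidAlgebra.supported_nfoldSum (S : Set M) (n : ℕ) :
    supported K K (nfoldSum S n) = supported K K S ^ n := by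
  induction n with
  | zero =>
    rw [nfoldSum, pow_zero, supported_eq_span_single, Set.image_singleton, ← one_def,
      Submodule.one_eq_span]
  | succ n ih => rw [nfoldSum, supported_setAdd, ih, pow_succ']

end SupportedSumset

theorem statement4_general {F : Type*} [Field F] {ℓ : ℕ}
    (Ω₁ : Finset (Fin ℓ → ℕ))
    {g : Type*} [LieRing g] [LieAlgebra F g]
    {ι : Type*} (bg : Module.Basis ι F g)
    (k : ℕ) (p : MvPolynomial ι F) (hp : p.IsHomogeneous k)
    (Fm Gm : g →ₗ[F] AddMonoidAlgebra F (Fin ℓ → ℤ))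
    (hF : ∀ y : g, Fm y ∈ Submodule.span F
      ((fun γ => AddMonoidAlgebra.single γ (1 : F)) ''
        {γ : Fin ℓ → ℤ | ∃ β ∈ Ω₁, γ = -(zc β)}))
    (hG : ∀ y : g, Gm y ∈ Submodule.span F
      ((fun γ => AddMonoidAlgebra.single γ (1 : F)) ''
        {γ : Fin ℓ → ℤ | (∃ α ∈ Ω₁, ∃ β ∈ Ω₁, γ = zc α - zc β)
          ∧ ¬(∃ β ∈ Ω₁, γ = -(zc β))})) :
    aeval (fun i => Fm (bg i) + Gm (bg i)) p - aeval (fun i => Fm (bg i)) p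
      ∈ Submodule.span F ((fun γ => AddMonoidAlgebra.single γ (1 : F)) ''
          (⋃ j ∈ Finset.Icc 1 k, setAdd
            (nfoldSum {γ : Fin ℓ → ℤ | (∃ α ∈ Ω₁, ∃ β ∈ Ω₁, γ = zc α - zc β)
                ∧ ¬(∃ β ∈ Ω₁, γ = -(zc β))} j)
            (nfoldSum {γ : Fin ℓ → ℤ | ∃ β ∈ Ω₁, γ = -(zc β)} (k - j)))) := by
  simp only [← AddMonoidAlgebra.supported_eq_span_single] at hF hG ⊢
  simp only [AddMonoidAlgebra.supported_biUnion, AddMonoidAlgebra.supported_setAdd,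
    AddMonoidAlgebra.supported_nfoldSum]
  exact hp.aeval_add_sub_aeval_mem _ _ (fun i => hF (bg i)) (fun i => hG (bg i))

/-- Suppose `p ∈ S^k(g)` for some `k ≥ 1` (with `S(g)` modeled as
`MvPolynomial ι F` via a basis `bg` of `g`).  Then for all
`F ∈ g* ⊗ span_F{q^γ : γ ∈ -Ω₁}` and `G ∈ g* ⊗ span_F{q^γ : γ ∈ (Ω₁ - Ω₁) \ (-Ω₁)}`
(modeled, via finite-dimensionality of `g`, as linear maps `g → F[Γ]` all of whose values
lie in the respective spans, where `F[Γ] = F[ℤ^ℓ]` is modeled as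
`AddMonoidAlgebra F (Fin ℓ → ℤ)` with `q^γ = single γ 1`), the difference
`p(F + G) - p(F)` lies in `span_F{q^γ : γ ∈ Φ_k}`, where
`Φ_k = ⋃_{j=1}^{k} (((Ω₁ - Ω₁) \ (-Ω₁))^j + (-Ω₁)^{k-j})`.
Evaluation of `p` at an element of `g* ⊗ F[Γ]` is via the induced algebra homomorphism
`S(g) → F[Γ]` determined by `x ↦ ∑ᵢ fᵢ(x) bᵢ`. -/
theorem statement4 {F : Type*} [Field F] [CharZero F] {ℓ : ℕ}
    (Ω₁ : Finset (Fin ℓ → ℕ))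
    (hstab : ∀ ω γ : Fin ℓ → ℕ, ω ∉ Ω₁ → ω + γ ∉ Ω₁)
    {g : Type*} [LieRing g] [LieAlgebra F g] [FiniteDimensional F g]
    {ι : Type*} [Fintype ι] (bg : Module.Basis ι F g)
    (k : ℕ) (hk : 1 ≤ k) (p : MvPolynomial ι F) (hp : p.IsHomogeneous k)
    (Fm Gm : g →ₗ[F] AddMonoidAlgebra F (Fin ℓ → ℤ))
    (hF : ∀ y : g, Fm y ∈ Submodule.span F
      ((fun γ => AddMonoidAlgebra.single γ (1 : F)) ''
        {γ : Fin ℓ → ℤ | ∃ β ∈ Ω₁, γ = -(zc β)}))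
    (hG : ∀ y : g, Gm y ∈ Submodule.span F
      ((fun γ => AddMonoidAlgebra.single γ (1 : F)) ''
        {γ : Fin ℓ → ℤ | (∃ α ∈ Ω₁, ∃ β ∈ Ω₁, γ = zc α - zc β)
          ∧ ¬(∃ β ∈ Ω₁, γ = -(zc β))})) :
    aeval (fun i => Fm (bg i) + Gm (bg i)) p - aeval (fun i => Fm (bg i)) p
      ∈ Submodule.span F ((fun γ => AddMonoidAlgebra.single γ (1 : F)) ''
          (⋃ j ∈ Finset.Icc 1 k, setAdd
            (nfoldSum {γ : Fin ℓ → ℤ | (∃ α ∈ Ω₁, ∃ β ∈ Ω₁, γ = zc α - zc β)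
                ∧ ¬(∃ β ∈ Ω₁, γ = -(zc β))} j)
            (nfoldSum {γ : Fin ℓ → ℤ | ∃ β ∈ Ω₁, γ = -(zc β)} (k - j)))) :=
  statement4_general Ω₁ bg k p hp Fm Gm hF hG
end

section
/- If Ω₁ has a greatest element μ, then for every k ≥ 1 one has Ω₁^k \ (−Φ_k) = kμ − Ω₁, where kμ − Ω₁ = {kμ − ω : ω ∈ Ω₁}. -/
/-!
Since `Ω₁` is closed downwards and has a greatest element `μ`, it is the box `[0, μ]`, so in
`ℤ^ℓ` the set `A = Ω₁` equals `Icc 0 μ` and is invariant under `a ↦ μ - a`. Two summands can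
therefore always be merged: `a + b = (a + b - μ) + μ` with `a + b - μ = a - (μ - b) ∈ A - A`.
Either `a + b - μ ∈ A`, or it lies in `D = (A - A) \ A`; merging repeatedly, an element of `A^k`
outside `D + A^(k-1)` is `(k-1)μ + a = kμ - (μ - a)`. Conversely every element of `D` and of `A`
is at most `μ`, so if `kμ - a` were in `D^j + A^(k-j)`, one `D`-summand `α - β` would be at least
`μ - a ≥ 0` and at most `α`, hence in `A`.
-/

open scoped Pointwise

namespace Set

theorem nsmul_Iic_subset {α : Type*} [AddMonoid α] [Preorder α] [AddLeftMono α] [AddRightMono α]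
    (a : α) : ∀ n : ℕ, n • Iic a ⊆ Iic (n • a)
  | 0 => by simp
  | n + 1 => by
    rw [succ_nsmul, succ_nsmul]
    exact (add_subset_add_right (nsmul_Iic_subset a n)).trans (Iic_add_Iic_subset _ _)

section Reflection

variable {G : Type*} [AddCommGroup G] {A : Set G} {μ : G}

theorem succ_nsmul_sub_mem_succ_nsmul (hμ : μ ∈ A) (hA : ∀ a ∈ A, μ - a ∈ A) {a : G} (ha : a ∈ A)
    (n : ℕ) : (n + 1) • μ - a ∈ (n + 1) • A := by
  rw [succ_nsmul, succ_nsmul, add_sub_assoc]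
  exact add_mem_add (nsmul_mem_nsmul hμ) (hA a ha)

theorem eq_nsmul_add_or_mem_sdiff_add_nsmul (hμ : μ ∈ A) (hA : ∀ a ∈ A, μ - a ∈ A) :
    ∀ (n : ℕ), ∀ x ∈ (n + 1) • A, (∃ a ∈ A, x = n • μ + a) ∨ x ∈ (A - A) \ A + n • A
  | 0, x, hx => Or.inl ⟨x, by simpa using hx, by simp⟩
  | n + 1, x, hx => by
    rw [succ_nsmul] at hx
    obtain ⟨y, hy, b, hb, rfl⟩ := mem_add.1 hx
    rcases eq_nsmul_add_or_mem_sdiff_add_nsmul hμ hA n y hy with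
      ⟨c, hc, rfl⟩ | ⟨d, hd, z, hz, rfl⟩
    · by_cases hcb : c + b - μ ∈ A
      · exact Or.inl ⟨c + b - μ, hcb, by rw [succ_nsmul]; abel⟩
      · refine Or.inr (mem_add.2 ⟨c + b - μ, ⟨mem_sub.2 ⟨c, hc, μ - b, hA b hb, by abel⟩, hcb⟩,
          (n + 1) • μ, nsmul_mem_nsmul hμ, by rw [succ_nsmul]; abel⟩)
    · exact Or.inr (mem_add.2 ⟨d, hd, z + b, by rw [succ_nsmul]; exact add_mem_add hz hb,
        (add_assoc d z b).symm⟩)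

end Reflection

section Box

variable {G : Type*} [AddCommGroup G] [PartialOrder G] [IsOrderedAddMonoid G] {μ : G}

theorem Icc_sub_Icc_sdiff_subset_Iic : (Icc 0 μ - Icc 0 μ) \ Icc 0 μ ⊆ Iic μ := by
  rintro _ ⟨⟨α, ⟨-, hα⟩, β, ⟨hβ, -⟩, rfl⟩, -⟩
  exact (sub_le_self α hβ).trans hα

theorem nsmul_sub_notMem_nsmul_sdiff_add_nsmul {a : G} (ha : a ∈ Icc 0 μ) {j r : ℕ} (hj : 1 ≤ j) :
    (j + r) • μ - a ∉ j • ((Icc 0 μ - Icc 0 μ) \ Icc 0 μ) + r • Icc 0 μ := by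
  obtain ⟨m, rfl⟩ := Nat.exists_eq_add_of_le' hj
  intro h
  rw [succ_nsmul] at h
  obtain ⟨_, ⟨u, hu, d, hd, rfl⟩, v, hv, hsum⟩ := h
  have hu' : u ≤ m • μ :=
    nsmul_Iic_subset μ m (nsmul_subset_nsmul_left Icc_sub_Icc_sdiff_subset_Iic hu)
  have hv' : v ≤ r • μ := nsmul_Iic_subset μ r (nsmul_subset_nsmul_left Icc_subset_Iic_self hv)
  obtain ⟨⟨α, hα, β, ⟨hβ, -⟩, rfl⟩, hd⟩ := hd
  simp only at hsum hd ⊢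
  refine hd ⟨?_, (sub_le_self α hβ).trans hα.2⟩
  have hd_eq : α - β = (μ - a) + (m • μ - u) + (r • μ - v) := by
    rw [eq_sub_of_add_eq' (eq_sub_of_add_eq hsum), add_nsmul, succ_nsmul]; abel
  rw [hd_eq]
  exact add_nonneg (add_nonneg (sub_nonneg.2 ha.2) (sub_nonneg.2 hu')) (sub_nonneg.2 hv')

theorem nsmul_Icc_sdiff_iUnion_eq (hμ : 0 ≤ μ) {k : ℕ} (hk : 1 ≤ k) :
    k • Icc 0 μ \ ⋃ j ∈ Finset.Icc 1 k, j • ((Icc 0 μ - Icc 0 μ) \ Icc 0 μ) + (k - j) • Icc 0 μ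
      = {x | ∃ a ∈ Icc 0 μ, x = k • μ - a} := by
  have hrefl : ∀ a ∈ Icc 0 μ, μ - a ∈ Icc 0 μ := fun a ha =>
    ⟨sub_nonneg.2 ha.2, sub_le_self μ ha.1⟩
  obtain ⟨n, rfl⟩ := Nat.exists_eq_add_of_le' hk
  ext x
  simp only [mem_sdiff, mem_iUnion, Finset.mem_Icc, mem_ofPred_eq, exists_prop, not_exists, not_and]
  constructor
  · rintro ⟨hx, hΦ⟩
    rcases eq_nsmul_add_or_mem_sdiff_add_nsmul (right_mem_Icc.2 hμ) hrefl n x hx with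
      ⟨a, ha, rfl⟩ | hD
    · exact ⟨μ - a, hrefl a ha, by rw [succ_nsmul]; abel⟩
    · exact absurd (by simpa using hD) (hΦ 1 ⟨le_rfl, by omega⟩)
  · rintro ⟨a, ha, rfl⟩
    refine ⟨succ_nsmul_sub_mem_succ_nsmul (right_mem_Icc.2 hμ) hrefl ha n, fun j ⟨hj, hjk⟩ => ?_⟩
    obtain ⟨r, hr⟩ := Nat.exists_eq_add_of_le hjk
    rw [hr, Nat.add_sub_cancel_left]
    exact nsmul_sub_notMem_nsmul_sdiff_add_nsmul ha hj

end Box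

theorem eq_Iic_of_isGreatest {M : Type*} [AddMonoid M] [PartialOrder M] [CanonicallyOrderedAdd M]
    {S : Set M} {μ : M} (hS : ∀ ω γ, ω ∉ S → ω + γ ∉ S) (hμ : IsGreatest S μ) : S = Iic μ := by
  refine Subset.antisymm hμ.2 fun ω hω => ?_
  obtain ⟨γ, rfl⟩ := le_iff_exists_add.1 hω
  exact not_not.1 fun h => hS ω γ h hμ.1

end Set

open Set

theorem setAdd_eq_add {M : Type*} [Add M] (S T : Set M) : setAdd S T = S + T := by
  ext; simp [setAdd, mem_add, eq_comm]

theorem nfoldSum_eq_nsmul {M : Type*} [AddMonoid M] (S : Set M) : ∀ n, nfoldSum S n = n • S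
  | 0 => (zero_nsmul S).symm
  | n + 1 => by rw [nfoldSum, setAdd_eq_add, nfoldSum_eq_nsmul S n, succ_nsmul']

theorem setOf_zc_le_eq_Icc {ℓ : ℕ} (μ : Fin ℓ → ℕ) :
    {δ : Fin ℓ → ℤ | ∃ β ≤ μ, δ = zc β} = Icc 0 (zc μ) := by
  ext δ
  constructor
  · rintro ⟨β, hβ, rfl⟩
    exact ⟨fun t => Int.natCast_nonneg _, fun t => Int.ofNat_le.2 (hβ t)⟩
  · rintro ⟨h0, hμ⟩
    refine ⟨fun t => (δ t).toNat, fun t => ?_, funext fun t => (Int.toNat_of_nonneg (h0 t)).symm⟩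
    have := hμ t
    simp only [zc] at this
    show (δ t).toNat ≤ μ t
    omega

/-- If `Ω₁` has a greatest element `μ`, then for every `k ≥ 1` one has
`Ω₁^k \ (-Φ_k) = kμ - Ω₁ = {kμ - ω : ω ∈ Ω₁}`, where
`-Φ_k = ⋃_{j=1}^{k} (((Ω₁ - Ω₁) \ Ω₁)^j + Ω₁^{k-j})`, all viewed as subsets of `ℤ^ℓ`. -/
theorem statement6 {ℓ : ℕ} (Ω₁ : Finset (Fin ℓ → ℕ))
    (hstab : ∀ ω γ : Fin ℓ → ℕ, ω ∉ Ω₁ → ω + γ ∉ Ω₁)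
    (μ : Fin ℓ → ℕ) (hμ : μ ∈ Ω₁) (hmax : ∀ ω ∈ Ω₁, ω ≤ μ)
    (k : ℕ) (hk : 1 ≤ k) :
    nfoldSum {δ : Fin ℓ → ℤ | ∃ β ∈ Ω₁, δ = zc β} k \
        (⋃ j ∈ Finset.Icc 1 k, setAdd
          (nfoldSum {δ : Fin ℓ → ℤ | (∃ α ∈ Ω₁, ∃ β ∈ Ω₁, δ = zc α - zc β)
              ∧ ¬(∃ β ∈ Ω₁, δ = zc β)} j)
          (nfoldSum {δ : Fin ℓ → ℤ | ∃ β ∈ Ω₁, δ = zc β} (k - j)))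
      = {δ : Fin ℓ → ℤ | ∃ ω ∈ Ω₁, δ = k • zc μ - zc ω} := by
  have hΩ₁ : ∀ ω, ω ∈ Ω₁ ↔ ω ≤ μ :=
    Set.ext_iff.1 (eq_Iic_of_isGreatest (S := (Ω₁ : Set (Fin ℓ → ℕ))) hstab ⟨hμ, hmax⟩)
  have hA : {δ : Fin ℓ → ℤ | ∃ β ∈ Ω₁, δ = zc β} = Icc 0 (zc μ) := by
    simp_rw [hΩ₁]; exact setOf_zc_le_eq_Icc μ
  have hD : {δ : Fin ℓ → ℤ | (∃ α ∈ Ω₁, ∃ β ∈ Ω₁, δ = zc α - zc β) ∧ ¬(∃ β ∈ Ω₁, δ = zc β)}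
      = (Icc 0 (zc μ) - Icc 0 (zc μ)) \ Icc 0 (zc μ) := by
    rw [← hA]; ext; simp [mem_sub, eq_comm]
  have hRHS : {δ : Fin ℓ → ℤ | ∃ ω ∈ Ω₁, δ = k • zc μ - zc ω}
      = {x | ∃ a ∈ Icc 0 (zc μ), x = k • zc μ - a} := by
    rw [← hA]; ext; simp
  simp_rw [nfoldSum_eq_nsmul, setAdd_eq_add, hD, hA, hRHS]
  exact nsmul_Icc_sdiff_iUnion_eq (fun t => Int.natCast_nonneg _) hk
end

section
/- For all i,j ∈ {1,…,r}, λ,ω ∈ Ω₁, and X ∈ t, one has R(p^(j)_ω) = ε_{j,ω} and (D_X(p^(j)_ω))(U_{i,λ}) = δ_{i,j}δ_{λ,ω}. -/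
open scoped TensorProduct
open MvPolynomial

/-- The ideal `⟨t^ω : ω ≰ μ⟩` of `F[t₁,…,t_ℓ]`. -/
noncomputable def truncIdeal (F : Type*) [Field F] {ℓ : ℕ} (μ : Fin ℓ → ℕ) :
    Ideal (MvPolynomial (Fin ℓ) F) :=
  Ideal.span ((fun ω : Fin ℓ → ℕ =>
    MvPolynomial.monomial (Finsupp.equivFunOnFinite.symm ω) (1 : F)) '' {ω | ¬ ω ≤ μ})

/-- The truncated polynomial algebra `A = F[t₁,…,t_ℓ]/⟨t^ω : ω ≰ μ⟩`. -/
noncomputable abbrev trunc (F : Type*) [Field F] {ℓ : ℕ} (μ : Fin ℓ → ℕ) : Type _ :=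
  MvPolynomial (Fin ℓ) F ⧸ truncIdeal F μ

/-- The Lie algebra structure over `F` on `A ⊗[F] g`. -/
noncomputable instance tensorLieAlgebra {F : Type*} [Field F] {A : Type*} [CommRing A]
    [Algebra F A] {g : Type*} [LieRing g] [LieAlgebra F g] :
    LieAlgebra F (A ⊗[F] g) where
  lie_smul t x y := by
    rw [← algebraMap_smul A t y, lie_smul, algebraMap_smul]

/-- The centralizer `L^x = {y ∈ L : ⁅x, y⁆ = 0}` of an element `x` of a Lie algebra. -/
noncomputable def cent (F : Type*) [Field F] (L : Type*) [LieRing L] [LieAlgebra F L]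
    (x : L) : Submodule F L where
  carrier := {y | ⁅x, y⁆ = 0}
  add_mem' := by
    intro a b ha hb
    simp only [Set.mem_setOf_eq] at *
    rw [lie_add, ha, hb, add_zero]
  zero_mem' := by simp
  smul_mem' := by
    intro c a ha
    simp only [Set.mem_setOf_eq] at *
    rw [lie_smul, ha, smul_zero]

/-- An element of a finite-dimensional Lie algebra is regular if its centralizer has the
minimal possible dimension. -/
def isRegular (F : Type*) [Field F] (L : Type*) [LieRing L] [LieAlgebra F L]
    (x : L) : Prop :=
  Module.finrank F (cent F L x) = sInf (Set.range fun z : L => Module.finrank F (cent F L z))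

/-- The exponential of a (nilpotent) endomorphism of a finite-dimensional space in
characteristic zero: `exp N = ∑_{n ≤ dim} N^n / n!` (when `N` is nilpotent, all terms of
the series beyond the dimension vanish). -/
noncomputable def expEnd {F : Type*} [Field F] {M : Type*} [AddCommGroup M] [Module F M]
    (N : Module.End F M) : Module.End F M :=
  ∑ n ∈ Finset.range (Module.finrank F M + 1), ((n.factorial : F)⁻¹) • N ^ n

/-- `reach F L X Y` holds if `Y` is obtained from `X` by applying an element of the
adjoint group of `L`, i.e. a finite composition of automorphisms `exp (ad N)` with
`ad N` nilpotent. -/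
def reach (F : Type*) [Field F] (L : Type*) [LieRing L] [LieAlgebra F L]
    (X Y : L) : Prop :=
  ∃ l : List L, (∀ N ∈ l, IsNilpotent ((LieAlgebra.ad F L N : Module.End F L)))
    ∧ l.foldr (fun N v => expEnd (LieAlgebra.ad F L N : Module.End F L) v) X = Y

/-- The subspace `g^{x₋} ⊗ A` of `A ⊗ g`. -/
noncomputable def centSub (F : Type*) [Field F] {A : Type*} [CommRing A] [Algebra F A]
    {g : Type*} [LieRing g] [LieAlgebra F g] (xm : g) : Submodule F (A ⊗[F] g) :=
  LinearMap.range (TensorProduct.map (LinearMap.id : A →ₗ[F] A) (cent F g xm).subtype)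

/-- The transversal slice `t = x₊ ⊗ 1 + g^{x₋} ⊗ A ⊆ g ⊗ A`. -/
def tSlice (F : Type*) [Field F] {A : Type*} [CommRing A] [Algebra F A]
    {g : Type*} [LieRing g] [LieAlgebra F g] (xp xm : g) : Set (A ⊗[F] g) :=
  {Z | Z - (1 : A) ⊗ₜ[F] xp ∈ centSub F xm}


/-- The coadjoint action of `x ∈ g` on `S(g*) = MvPolynomial ι F` (the variable `X i`
corresponding to the coordinate function `bg.coord i`), described by its values on
variables: `x · (bg.coord i) = ∑ j, (bg.coord i ⁅bg j, x⁆) (bg.coord j)`. -/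
noncomputable def vCoad {F : Type*} [Field F] {g : Type*} [LieRing g] [LieAlgebra F g]
    {ι : Type*} [Fintype ι] (bg : Module.Basis ι F g) (x : g) : ι → MvPolynomial ι F :=
  fun i => ∑ j, (bg.repr ⁅bg j, x⁆ i) • X j

/-- The algebra homomorphism `S(g*) → S((g ⊗ A)*)` induced by `f ↦ ∑_{γ ≤ μ} f ⊗ ε^γ`.
Here `S(g*)` is modeled as `MvPolynomial ι F` (variables = coordinate functions for the
basis `bg` of `g`) and `S((g ⊗ A)*) = S(g* ⊗ A*)` as
`MvPolynomial (↥(Finset.Iic μ) × ι) F` (the variable `X (γ, i)` corresponding to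
`bg.coord i ⊗ ε^γ`, the coordinate function dual to the basis vector `τ^γ ⊗ bg i` of
`A ⊗ g`). -/
noncomputable def toSA (F : Type*) [Field F] {ℓ : ℕ} (μ : Fin ℓ → ℕ) (ι : Type*) :
    MvPolynomial ι F →ₐ[F] MvPolynomial (↥(Finset.Iic μ) × ι) F :=
  aeval (fun i => ∑ ω : ↥(Finset.Iic μ), X (ω, i))

/-- For `p ∈ S(g*)` and `ω ∈ ℕ^ℓ`, the polynomial `p_ω ∈ S((g ⊗ A)*)`: the component of
degree `-ω` (in the `ℤ^ℓ`-grading in which `ε^γ` has degree `-γ`, i.e. the component of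
weight `ω` when the variable `X (γ, i)` is assigned weight `γ ∈ ℕ^ℓ`) of the image of `p`
under `toSA`. -/
noncomputable def pAComp (F : Type*) [Field F] {ℓ : ℕ} (μ : Fin ℓ → ℕ) {ι : Type*}
    (p : MvPolynomial ι F) (ω : Fin ℓ → ℕ) : MvPolynomial (↥(Finset.Iic μ) × ι) F :=
  weightedHomogeneousComponent (fun z : ↥(Finset.Iic μ) × ι => (z.1 : Fin ℓ → ℕ)) ω
    (toSA F μ ι p)

/-- The directional derivative `(D_X P)(Y) = d/dt|₀ P(X + tY) = ∑_z ∂_z P(X) · Y_z` of a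
polynomial function `P` on a space `L` (with basis `bM`) at the point `X` in the
direction `Y`.  This is the value at `Y` of `D_f(P)`, where `D_f : S(L*) → L*` is the
unique `f`-derivation with `D_f = id` on `L*` and `f` is evaluation at `X`. -/
noncomputable def dirDeriv {F : Type*} [Field F] {L : Type*} [AddCommGroup L] [Module F L]
    {ζ : Type*} [Fintype ζ] (bM : Module.Basis ζ F L) (P : MvPolynomial ζ F) (Xv Yv : L) : F :=
  ∑ z, (eval (fun w => bM.repr Xv w) (pderiv z P)) * (bM.repr Yv z)

/-- The subalgebra of polynomials killed by each member of a family of derivations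
(each derivation given by its values `v t : σ → MvPolynomial σ R` on variables);
this models the invariants of a Lie algebra action extended by derivations. -/
noncomputable def invAlg {R : Type*} [CommRing R] {σ : Type*} [Fintype σ]
    {ξ : Type*} (v : ξ → σ → MvPolynomial σ R) : Subalgebra R (MvPolynomial σ R) where
  carrier := {q | ∀ t : ξ, extDer (v t) q = 0}
  mul_mem' := by
    intro a b ha hb t
    have hmul : ∀ j, v t j * pderiv j (a * b)
        = b * (v t j * pderiv j a) + a * (v t j * pderiv j b) := by
      intro j; rw [pderiv_mul]; ring
    simp only [extDer] at *
    rw [Finset.sum_congr rfl (fun j _ => hmul j), Finset.sum_add_distrib, ← Finset.mul_sum,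
      ← Finset.mul_sum, ha t, hb t]
    simp
  add_mem' := by
    intro a b ha hb t
    simp only [extDer, map_add, mul_add, Finset.sum_add_distrib] at *
    rw [ha t, hb t]; simp
  algebraMap_mem' := by
    intro r t
    simp [extDer, algebraMap_eq]

/-!
The value of `p_ω` at a point `X = ∑_γ τ^γ ⊗ X_γ` of `A ⊗ g` is the coefficient of `t^ω` in
`p(∑_γ t^γ X_γ)`, computed in the monoid algebra `F[ℕ^ℓ]`. On the slice,
`∑_γ t^γ X_γ = x₊ + ∑_m q_m u_m` with `q_m = ∑_γ c_{m,γ} t^γ`. Since `F` is infinite, the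
normalization `p⁽ʲ⁾(x₊ + ∑_m c_m u_m) = c_j` is a polynomial identity in the `c_m`, so it holds
for the `q_m` as well, and the `t^ω`-coefficient of `q_j` is `c_{j,ω}`. Moving `X` in the
direction `U_{i,λ}` stays in the slice and only changes `c_{i,λ}`, so `s ↦ p⁽ʲ⁾_ω(X + s U_{i,λ})`
is the affine function `c_{j,ω} + δ_{ij} δ_{λω} s`, whose slope is the directional derivative.
-/

namespace MvPolynomial

theorem coeff_aeval_single_eq_eval_weightedHomogeneousComponent {R σ M : Type*}
    [CommSemiring R] [AddCommMonoid M] (w : σ → M) (a : σ → R) (m : M) (P : MvPolynomial σ R) :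
    (aeval (fun z => AddMonoidAlgebra.single (w z) (a z)) P).coeff m
      = eval a (weightedHomogeneousComponent w m P) := by
  classical
  induction P using MvPolynomial.induction_on' with
  | add p q hp hq => simp only [map_add, AddMonoidAlgebra.coeff_add, Finsupp.add_apply, hp, hq]
  | monomial d r =>
    rw [weightedHomogeneousComponent_of_mem (isWeightedHomogeneous_monomial w d r rfl)]
    by_cases hd : Finsupp.weight w d = m <;>
      simp_all [aeval_monomial, AddMonoidAlgebra.single_pow, AddMonoidAlgebra.coeff_single,
        Finsupp.weight_apply, eval_monomial, eq_comm]

theorem eval_aeval_C_add_C_mul_X {R σ : Type*} [CommSemiring R] (a b : σ → R) (t : R)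
    (P : MvPolynomial σ R) :
    (aeval (fun z => Polynomial.C (a z) + Polynomial.C (b z) * Polynomial.X) P).eval t
      = eval (fun z => a z + b z * t) P := by
  rw [← Polynomial.coe_aeval_eq_eval, comp_aeval_apply, ← aeval_eq_eval]
  simp

theorem coeff_one_aeval_C_add_C_mul_X {R σ : Type*} [CommRing R] [Fintype σ] (a b : σ → R)
    (P : MvPolynomial σ R) :
    (aeval (fun z => Polynomial.C (a z) + Polynomial.C (b z) * Polynomial.X) P).coeff 1
      = ∑ z, eval a (pderiv z P) * b z := by
  classical
  induction P using MvPolynomial.induction_on with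
  | C r => simp
  | add p q hp hq =>
    simp only [map_add, Polynomial.coeff_add, hp, hq, ← Finset.sum_add_distrib, add_mul]
  | mul_X p n hp =>
    have hcoeff0 : (aeval (fun z => Polynomial.C (a z) + Polynomial.C (b z) * Polynomial.X)
        p).coeff 0 = eval a p := by
      simp [Polynomial.coeff_zero_eq_eval_zero, eval_aeval_C_add_C_mul_X]
    simp only [map_mul, aeval_X, mul_add, ← mul_assoc, Polynomial.coeff_add,
      Polynomial.coeff_mul_C, Polynomial.coeff_mul_X, hcoeff0, hp, Derivation.leibniz,
      pderiv_X, map_add, smul_eq_mul, Pi.single_apply]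
    simp [mul_add, Finset.sum_add_distrib, Finset.mul_sum, mul_left_comm, mul_comm, add_comm]

theorem aeval_eq_of_forall_eval_basis_repr {F V ι κ : Type*} [Field F] [Infinite F]
    [AddCommGroup V] [Module F V] [Fintype κ] (b : Module.Basis ι F V) (x : V) (u : κ → V)
    (P : MvPolynomial ι F) (j : κ)
    (h : ∀ c : κ → F, eval (fun w => b.repr (x + ∑ m, c m • u m) w) P = c j)
    {S : Type*} [CommRing S] [Algebra F S] (q : κ → S) :
    aeval (fun w => algebraMap F S (b.repr x w) + ∑ m, q m * algebraMap F S (b.repr (u m) w)) P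
      = q j := by
  have hX : aeval (fun w => C (b.repr x w) + ∑ m, X m * C (b.repr (u m) w)) P
      = (X j : MvPolynomial κ F) := by
    refine MvPolynomial.funext fun c => ?_
    rw [← aeval_eq_eval, comp_aeval_apply]
    simpa [mul_comm] using h c
  rw [← aeval_X (R := F) q j, ← hX, comp_aeval_apply]
  simp

end MvPolynomial

theorem dirDeriv_eq_of_eval_add_smul {F L ζ : Type*} [Field F] [Infinite F] [AddCommGroup L]
    [Module F L] [Fintype ζ] (bM : Module.Basis ζ F L) (P : MvPolynomial ζ F) (Xv Yv : L)
    (a δ : F) (h : ∀ t : F, eval (fun w => bM.repr (Xv + t • Yv) w) P = a + δ * t) :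
    dirDeriv bM P Xv Yv = δ := by
  have hline : aeval (fun z => Polynomial.C (bM.repr Xv z) + Polynomial.C (bM.repr Yv z)
      * Polynomial.X) P = Polynomial.C a + Polynomial.C δ * Polynomial.X :=
    Polynomial.funext fun t => by
      rw [eval_aeval_C_add_C_mul_X, Polynomial.eval_add, Polynomial.eval_mul, Polynomial.eval_C,
        Polynomial.eval_C, Polynomial.eval_X, ← h t]
      congr 2 with z
      simp [mul_comm]
  rw [dirDeriv, ← coeff_one_aeval_C_add_C_mul_X, hline]
  simp

theorem aeval_toSA {F : Type*} [Field F] {ℓ : ℕ} (μ : Fin ℓ → ℕ) {ι S : Type*} [CommRing S]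
    [Algebra F S] (φ : ↥(Finset.Iic μ) × ι → S) (P : MvPolynomial ι F) :
    aeval φ (toSA F μ ι P) = aeval (fun i => ∑ γ : ↥(Finset.Iic μ), φ (γ, i)) P := by
  rw [toSA, comp_aeval_apply]
  simp

theorem eval_pAComp {F : Type*} [Field F] {ℓ : ℕ} (μ : Fin ℓ → ℕ) {ι : Type*}
    (a : ↥(Finset.Iic μ) × ι → F) (P : MvPolynomial ι F) (ω : Fin ℓ → ℕ) :
    eval a (pAComp F μ P ω) = (aeval (fun i => ∑ γ : ↥(Finset.Iic μ),
      AddMonoidAlgebra.single (γ : Fin ℓ → ℕ) (a (γ, i))) P).coeff ω := by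
  rw [pAComp, ← coeff_aeval_single_eq_eval_weightedHomogeneousComponent, aeval_toSA]

theorem sum_single_tensorProduct_repr {F A V κ ι ρ M : Type*} [Field F] [AddCommGroup A]
    [Module F A] [AddCommGroup V] [Module F V] [Fintype κ] [Fintype ρ] [AddCommMonoid M]
    (bA : Module.Basis κ F A) (bV : Module.Basis ι F V) (e : κ → M) (o : κ) (x : V)
    (u : ρ → V) (c : ρ × κ → F) (w : ι) :
    ∑ γ, AddMonoidAlgebra.single (e γ) ((bA.tensorProduct bV).repr
        (bA o ⊗ₜ[F] x + ∑ z, c z • (bA z.2 ⊗ₜ[F] u z.1)) (γ, w))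
      = AddMonoidAlgebra.single (e o) (bV.repr x w)
        + ∑ m, (∑ γ, AddMonoidAlgebra.single (e γ) (c (m, γ)))
          * AddMonoidAlgebra.single 0 (bV.repr (u m) w) := by
  classical
  have single_sum (m : M) (f : ρ → F) :
      AddMonoidAlgebra.single m (∑ z, f z) = ∑ z, AddMonoidAlgebra.single m (f z) :=
    map_sum (AddMonoidAlgebra.singleAddHom m) f _
  simp [Module.Basis.tensorProduct_repr_tmul_apply, Finsupp.single_apply, Fintype.sum_prod_type,
    Finset.sum_add_distrib, Finset.sum_mul, AddMonoidAlgebra.single_mul_single, apply_ite,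
    single_sum]
  exact Finset.sum_comm

theorem eval_pAComp_slice {F V A ι κ : Type*} [Field F] [Infinite F] [AddCommGroup V]
    [Module F V] [AddCommGroup A] [Module F A] [Fintype ι] [Fintype κ] {ℓ : ℕ} {μ : Fin ℓ → ℕ}
    (bV : Module.Basis ι F V) (bA : Module.Basis ↥(Finset.Iic μ) F A) (o : ↥(Finset.Iic μ))
    (ho : (o : Fin ℓ → ℕ) = 0) (x : V) (u : κ → V) (P : MvPolynomial ι F) (j : κ)
    (hnorm : ∀ c : κ → F, eval (fun w => bV.repr (x + ∑ m, c m • u m) w) P = c j)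
    (c : κ × ↥(Finset.Iic μ) → F) (ω : ↥(Finset.Iic μ)) :
    eval (fun z => (bA.tensorProduct bV).repr
        (bA o ⊗ₜ[F] x + ∑ z, c z • (bA z.2 ⊗ₜ[F] u z.1)) z) (pAComp F μ P ω) = c (j, ω) := by
  have halg (r : F) :
      AddMonoidAlgebra.single 0 r = algebraMap F (AddMonoidAlgebra F (Fin ℓ → ℕ)) r := rfl
  rw [eval_pAComp]
  simp only [sum_single_tensorProduct_repr, ho, halg]
  rw [MvPolynomial.aeval_eq_of_forall_eval_basis_repr bV x u P j hnorm]
  simp [AddMonoidAlgebra.coeff_sum, AddMonoidAlgebra.coeff_single, Finsupp.single_apply]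

theorem statement14_general {F : Type*} [Field F] [CharZero F]
    {g : Type*} [LieRing g] [LieAlgebra F g]
    {ℓ : ℕ} (μ : Fin ℓ → ℕ)
    (xp : g)
    {ι : Type*} [Fintype ι] (bg : Module.Basis ι F g)
    (bA : Module.Basis ↥(Finset.Iic μ) F (trunc F μ))
    (hbA : ∀ ω : ↥(Finset.Iic μ), bA ω = Ideal.Quotient.mk (truncIdeal F μ)
      (MvPolynomial.monomial (Finsupp.equivFunOnFinite.symm (ω : Fin ℓ → ℕ)) (1 : F)))
    (r : ℕ) (u : Fin r → g)
    (p : Fin r → MvPolynomial ι F)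
    (hnorm : ∀ (c : Fin r → F) (j : Fin r),
      eval (fun i => bg.repr (xp + ∑ m, c m • u m) i) (p j) = c j)
    (c : Fin r × ↥(Finset.Iic μ) → F) (Xv : trunc F μ ⊗[F] g)
    (hXv : Xv = (1 : trunc F μ) ⊗ₜ[F] xp
      + ∑ z : Fin r × ↥(Finset.Iic μ), c z • (bA z.2 ⊗ₜ[F] u z.1))
    (i j : Fin r) (lam om : ↥(Finset.Iic μ)) :
    eval (fun w => (bA.tensorProduct bg).repr Xv w)
        (pAComp F μ (p j) (om : Fin ℓ → ℕ)) = c (j, om)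
      ∧ dirDeriv (bA.tensorProduct bg) (pAComp F μ (p j) (om : Fin ℓ → ℕ)) Xv
          (bA lam ⊗ₜ[F] u i)
        = if i = j ∧ lam = om then 1 else 0 := by
  set o : ↥(Finset.Iic μ) := ⟨0, by simp⟩
  have hone : bA o = 1 := by
    have hzero : Finsupp.equivFunOnFinite.symm (o : Fin ℓ → ℕ) = 0 := Finsupp.ext fun _ => rfl
    rw [hbA, hzero, monomial_zero', C_1, map_one]
  have hslice (c' : Fin r × ↥(Finset.Iic μ) → F) :=
    eval_pAComp_slice bg bA o rfl xp u (p j) j (hnorm · j) c' om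
  rw [hone] at hslice
  refine ⟨hXv ▸ hslice c, dirDeriv_eq_of_eval_add_smul _ _ _ _ (c (j, om)) _ fun t => ?_⟩
  have hline : Xv + t • (bA lam ⊗ₜ[F] u i)
      = 1 ⊗ₜ xp + ∑ z : Fin r × ↥(Finset.Iic μ),
          (c + Pi.single (i, lam) t : Fin r × ↥(Finset.Iic μ) → F) z
            • (bA z.2 ⊗ₜ[F] u z.1) := by
    simp [hXv, add_smul, Finset.sum_add_distrib, Pi.single_apply, add_assoc]
  rw [hline, hslice]
  by_cases hij : i = j <;> by_cases hlo : lam = om <;> simp [hij, hlo]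

set_option synthInstance.maxHeartbeats 1000000 in
/-- In the semisimple setting (`F` algebraically closed of
characteristic zero, `g` semisimple with principal `sl₂`-triple `(x₊, x₋, h)`,
`A = F[t₁,…,t_ℓ]/⟨t^ω : ω ≰ μ⟩` with monomial basis `bA` indexed by `Ω₁ = {ω : ω ≤ μ}`,
`(u₁,…,u_r)` a basis of `g^{x₋}`, and `p⁽¹⁾,…,p⁽ʳ⁾` homogeneous algebraically independent
generators of `S(g*)^g` with `p⁽ʲ⁾ ∈ S^{k_j}(g*)`, `k_j ≥ 1`, normalized so that
`p⁽ʲ⁾(x₊ + ∑ᵢ cᵢuᵢ) = c_j`): for all `i, j ∈ {1,…,r}`, `λ, ω ∈ Ω₁` and `X ∈ t`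
(parametrized as `X = x₊ ⊗ 1 + ∑_{(i,ω)} c_{(i,ω)} u_i ⊗ τ^ω`), one has
`R(p⁽ʲ⁾_ω) = ε_{j,ω}` (i.e. the value of `p⁽ʲ⁾_ω` at `X` is the coordinate `c (j, ω)`)
and `(D_X(p⁽ʲ⁾_ω))(U_{i,λ}) = δ_{i,j} δ_{λ,ω}`, where `U_{i,λ} = u_i ⊗ τ^λ`. -/
theorem statement14 {F : Type*} [Field F] [CharZero F] [IsAlgClosed F]
    {g : Type*} [LieRing g] [LieAlgebra F g] [FiniteDimensional F g]
    [LieAlgebra.IsSemisimple F g]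
    {ℓ : ℕ} (μ : Fin ℓ → ℕ)
    (xp xm h : g)
    (hhp : ⁅h, xp⁆ = 2 • xp) (hhm : ⁅h, xm⁆ = -(2 • xm)) (hpm : ⁅xp, xm⁆ = h)
    (hpreg : isRegular F g xp) (hmreg : isRegular F g xm) (hhreg : isRegular F g h)
    {ι : Type*} [Fintype ι] (bg : Module.Basis ι F g)
    (bA : Module.Basis ↥(Finset.Iic μ) F (trunc F μ))
    (hbA : ∀ ω : ↥(Finset.Iic μ), bA ω = Ideal.Quotient.mk (truncIdeal F μ)
      (MvPolynomial.monomial (Finsupp.equivFunOnFinite.symm (ω : Fin ℓ → ℕ)) (1 : F)))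
    (r : ℕ) (u : Fin r → g)
    (humem : ∀ m, u m ∈ cent F g xm) (huli : LinearIndependent F u)
    (huspan : Submodule.span F (Set.range u) = cent F g xm)
    (k : Fin r → ℕ) (hk : ∀ j, 1 ≤ k j)
    (p : Fin r → MvPolynomial ι F)
    (hphom : ∀ j, (p j).IsHomogeneous (k j))
    (hpinv : ∀ (j : Fin r) (x : g), extDer (vCoad bg x) (p j) = 0)
    (hpind : AlgebraicIndependent F p)
    (hpgen : Algebra.adjoin F (Set.range p) = invAlg (fun x : g => vCoad bg x))
    (hnorm : ∀ (c : Fin r → F) (j : Fin r),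
      eval (fun i => bg.repr (xp + ∑ m, c m • u m) i) (p j) = c j)
    (c : Fin r × ↥(Finset.Iic μ) → F) (Xv : trunc F μ ⊗[F] g)
    (hXv : Xv = (1 : trunc F μ) ⊗ₜ[F] xp
      + ∑ z : Fin r × ↥(Finset.Iic μ), c z • (bA z.2 ⊗ₜ[F] u z.1))
    (i j : Fin r) (lam om : ↥(Finset.Iic μ)) :
    eval (fun w => (bA.tensorProduct bg).repr Xv w)
        (pAComp F μ (p j) (om : Fin ℓ → ℕ)) = c (j, om)
      ∧ dirDeriv (bA.tensorProduct bg) (pAComp F μ (p j) (om : Fin ℓ → ℕ)) Xv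
          (bA lam ⊗ₜ[F] u i)
        = if i = j ∧ lam = om then 1 else 0 :=
  statement14_general μ xp bg bA hbA r u p hnorm c Xv hXv i j lam om
end
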